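/- arXiv:2407.01019 — 7 statements merged into one kernel-verified Lean document; each statement's English description precedes it below -/
import Mathlib

section
/- Let R : ℝ^N → [0,∞) be differentiable with locally Lipschitz gradient. Let (θ_n) be the sequence generated by the LCM backtracking algorithm applied to gradient descent, i.e. θ_{n+1} = θ_n − η_n ∇R(θ_n) where η_n = f2·η_{n−1}·f1^{−p_n} (with convention η_{−1} = η_init/f2) and p_n is the least k ∈ ℕ such that R(θ_n − η ∇R(θ_n)) − R(θ_n) ≤ −λ η ‖∇R(θ_n)‖² holds for η = f2·η_{n−1}·f1^{−k}. If the sequence (θ_n) is bounded, then every accumulation point θ* of (θ_n) (i.e. every limit of a convergent subsequence) satisfies ∇R(θ*) = 0. -/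
/-!
Each accepted step satisfies the Armijo inequality, so `R (θ n)` decreases by at least
`λ η_n ‖∇R(θ_n)‖²` and, being bounded below on the bounded trajectory, the decrements tend to
zero. On a closed ball around the trajectory `∇R` is Lipschitz and bounded, so every step size in
`(0, c]` satisfies the Armijo inequality for some `c > 0`. Backtracking starts each search at
`f2 η_{n-1} ≥ η_{n-1}` and only rejects trial steps larger than `c`, hence
`η_n ≥ min η_init (c / f1)` for all `n`. Therefore `∇R(θ_n) → 0`, and `∇R` vanishes at every
accumulation point by continuity.
-/

open scoped NNReal RealInnerProductSpace
open Filter Set Bornology Metric InnerProductSpace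

section Armijo

variable {E : Type*} [NormedAddCommGroup E] [InnerProductSpace ℝ E] [CompleteSpace E]

theorem Convex.sub_le_inner_gradient_add_of_lipschitzOnWith {R : E → ℝ} {s : Set E} {L : ℝ≥0}
    (hR : Differentiable ℝ R) (hs : Convex ℝ s) (hL : LipschitzOnWith L (gradient R) s)
    {x y : E} (hx : x ∈ s) (hy : y ∈ s) :
    R y - R x ≤ ⟪gradient R x, y - x⟫ + L * ‖y - x‖ ^ 2 := by
  have hseg := hs.segment_subset hx hy
  have hmvt : ‖R y - R x - fderiv ℝ R x (y - x)‖ ≤ L * ‖y - x‖ * ‖y - x‖ := by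
    refine (convex_segment x y).norm_image_sub_le_of_norm_hasFDerivWithin_le'
      (fun z _ => (hR z).hasFDerivAt.hasFDerivWithinAt) (fun z hz => ?_)
      (left_mem_segment ℝ x y) (right_mem_segment ℝ x y)
    calc ‖fderiv ℝ R z - fderiv ℝ R x‖ = ‖gradient R z - gradient R x‖ := by
          rw [← toDual_gradient, ← toDual_gradient, ← map_sub, LinearIsometryEquiv.norm_map]
      _ ≤ L * ‖z - x‖ := hL.norm_sub_le (hseg hz) hx
      _ ≤ L * ‖y - x‖ := by gcongr; exact norm_sub_le_of_mem_segment hz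
  rw [← inner_gradient_left, Real.norm_eq_abs] at hmvt
  nlinarith [le_abs_self (R y - R x - ⟪gradient R x, y - x⟫)]

def ArmijoCondition (R : E → ℝ) (lam : ℝ) (x : E) (t : ℝ) : Prop :=
  R (x - t • gradient R x) - R x ≤ -lam * t * ‖gradient R x‖ ^ 2

theorem armijoCondition_of_mul_le {R : E → ℝ} {s : Set E} {L : ℝ≥0} {lam t : ℝ}
    (hR : Differentiable ℝ R) (hs : Convex ℝ s) (hL : LipschitzOnWith L (gradient R) s)
    {x : E} (hx : x ∈ s) (hxt : x - t • gradient R x ∈ s) (ht : 0 ≤ t) (hLt : L * t ≤ 1 - lam) :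
    ArmijoCondition R lam x t := by
  have hdesc := hs.sub_le_inner_gradient_add_of_lipschitzOnWith hR hL hx hxt
  have hstep : x - t • gradient R x - x = -(t • gradient R x) := by abel
  rw [hstep, inner_neg_right, real_inner_smul_right, real_inner_self_eq_norm_sq, norm_neg,
    norm_smul, Real.norm_eq_abs, abs_of_nonneg ht] at hdesc
  unfold ArmijoCondition
  nlinarith [mul_le_mul_of_nonneg_right hLt (mul_nonneg ht (sq_nonneg ‖gradient R x‖))]

end Armijo

theorem Bornology.IsBounded.exists_pos_forall_armijoCondition {E : Type*}
    [NormedAddCommGroup E] [InnerProductSpace ℝ E] [ProperSpace E] {R : E → ℝ} {lam : ℝ}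
    (hR : Differentiable ℝ R) (hRlip : LocallyLipschitz (gradient R)) (hlam : lam < 1)
    {B : Set E} (hB : IsBounded B) :
    ∃ c > 0, ∀ x ∈ B, ∀ t ∈ Icc 0 c, ArmijoCondition R lam x t := by
  obtain ⟨ρ, hBρ⟩ := hB.subset_closedBall 0
  set K := closedBall (0 : E) (ρ + 1)
  have hK : IsCompact K := isCompact_closedBall _ _
  obtain ⟨L, hL⟩ := hRlip.locallyLipschitzOn.exists_lipschitzOnWith_of_compact hK
  obtain ⟨G, hG, hGK⟩ := (hK.image_of_continuousOn hRlip.continuous.continuousOn).isBounded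
    |>.exists_pos_norm_le
  refine ⟨min ((1 - lam) / (L + 1)) G⁻¹, lt_min (by bound) (by positivity), ?_⟩
  rintro x hx t ⟨ht0, htc⟩
  have hxρ : ‖x‖ ≤ ρ := mem_closedBall_zero_iff.mp (hBρ hx)
  have hxK : x ∈ K := closedBall_subset_closedBall (by linarith) (hBρ hx)
  have htG : t * ‖gradient R x‖ ≤ 1 :=
    calc t * ‖gradient R x‖ ≤ G⁻¹ * G := by
          gcongr
          exacts [htc.trans (min_le_right _ _), hGK _ (mem_image_of_mem _ hxK)]
      _ = 1 := inv_mul_cancel₀ hG.ne'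
  have htL : (L + 1) * t ≤ 1 - lam :=
    (le_div_iff₀' (by positivity)).mp (htc.trans (min_le_left _ _))
  refine armijoCondition_of_mul_le hR (convex_closedBall _ _) hL hxK ?_ ht0 (by linarith)
  rw [mem_closedBall_zero_iff]
  calc ‖x - t • gradient R x‖ ≤ ‖x‖ + ‖t • gradient R x‖ := norm_sub_le _ _
    _ = ‖x‖ + t * ‖gradient R x‖ := by rw [norm_smul, Real.norm_of_nonneg ht0]
    _ ≤ ρ + 1 := by linarith

theorem min_le_div_pow_of_forall_not {Accept : ℝ → Prop} {b c f : ℝ} {p : ℕ} (hb : 0 < b)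
    (hf : 0 < f) (hacc : ∀ t, 0 < t → t ≤ c → Accept t) (hfail : ∀ k < p, ¬ Accept (b / f ^ k)) :
    min b (c / f) ≤ b / f ^ p := by
  cases p with
  | zero => simp
  | succ q =>
    have hc : c < b / f ^ q := by
      by_contra! h
      exact hfail q q.lt_succ_self (hacc _ (by positivity) h)
    rw [pow_succ, ← div_div]
    exact min_le_of_right_le (div_le_div_of_nonneg_right hc.le hf.le)

theorem tendsto_zero_of_mul_le_sub_succ {a u : ℕ → ℝ} {c : ℝ} (hc : 0 < c) (ha : ∀ n, 0 ≤ a n)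
    (h : ∀ n, c * a n ≤ u n - u (n + 1)) (hu : BddBelow (range u)) :
    Tendsto a atTop (nhds 0) := by
  have hanti : Antitone u := antitone_nat_of_succ_le fun n => by
    nlinarith [h n, mul_nonneg hc.le (ha n)]
  have hlim := tendsto_atTop_ciInf hanti hu
  have hdiff : Tendsto (fun n => (u n - u (n + 1)) / c) atTop (nhds 0) := by
    simpa using (hlim.sub (hlim.comp (tendsto_add_atTop_nat 1))).div_const c
  refine squeeze_zero ha (fun n => ?_) hdiff
  rw [le_div_iff₀ hc, mul_comm]
  exact h n

theorem min_le_of_backtracking {Accept : ℕ → ℝ → Prop} {η : ℕ → ℝ} {η₀ c f1 f2 : ℝ}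
    (hη₀ : 0 < η₀) (hc : 0 < c) (hf1 : 0 < f1) (hf2 : 1 ≤ f2)
    (hacc : ∀ n t, 0 < t → t ≤ c → Accept n t)
    (hbt : ∀ n, ∃ p : ℕ, η n = (if n = 0 then η₀ else f2 * η (n - 1)) / f1 ^ p ∧
      ∀ k < p, ¬ Accept n ((if n = 0 then η₀ else f2 * η (n - 1)) / f1 ^ k)) (n : ℕ) :
    min η₀ (c / f1) ≤ η n := by
  induction n with
  | zero =>
    obtain ⟨p, hp, hfail⟩ := hbt 0
    simp only [if_pos] at hp hfail
    rw [hp]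
    exact min_le_div_pow_of_forall_not hη₀ hf1 (hacc 0) hfail
  | succ n ih =>
    obtain ⟨p, hp, hfail⟩ := hbt (n + 1)
    simp only [n.succ_ne_zero, if_false, Nat.add_sub_cancel] at hp hfail
    have hηn : 0 < η n := (lt_min hη₀ (div_pos hc hf1)).trans_le ih
    rw [hp]
    calc min η₀ (c / f1) ≤ min (f2 * η n) (c / f1) :=
          le_min (ih.trans (le_mul_of_one_le_left hηn.le hf2)) (min_le_right _ _)
      _ ≤ f2 * η n / f1 ^ p := min_le_div_pow_of_forall_not (by positivity) hf1 (hacc _) hfail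

theorem lcm_gd_accumulation_points_are_critical_general
    {N : ℕ} (R : EuclideanSpace ℝ (Fin N) → ℝ)
    (hRdiff : Differentiable ℝ R)
    (hRlip : LocallyLipschitz (gradient R))
    (lam ηinit f1 f2 : ℝ)
    (hlam : lam ∈ Set.Ioo (0 : ℝ) 1) (hηinit : 0 < ηinit) (hf1 : 1 < f1) (hf2 : 1 < f2)
    (θ : ℕ → EuclideanSpace ℝ (Fin N)) (η : ℕ → ℝ)
    (hstep : ∀ n, θ (n + 1) = θ n - η n • gradient R (θ n))
    -- LCM backtracking rule: `η n = f2 · η (n-1) · f1^(-p)` where `p` is the least `k`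
    -- satisfying the Armijo condition (with the convention `η_{-1} = ηinit / f2`).
    (hbt : ∀ n, ∃ p : ℕ,
      η n = (if n = 0 then ηinit else f2 * η (n - 1)) / f1 ^ p ∧
      (R (θ n - η n • gradient R (θ n)) - R (θ n) ≤ -lam * η n * ‖gradient R (θ n)‖ ^ 2) ∧
      (∀ k < p, ¬ (R (θ n - ((if n = 0 then ηinit else f2 * η (n - 1)) / f1 ^ k) • gradient R (θ n))
          - R (θ n) ≤
          -lam * ((if n = 0 then ηinit else f2 * η (n - 1)) / f1 ^ k) * ‖gradient R (θ n)‖ ^ 2)))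
    (hbdd : Bornology.IsBounded (Set.range θ))
    (θstar : EuclideanSpace ℝ (Fin N))
    (hacc : ∃ φ : ℕ → ℕ, StrictMono φ ∧ Tendsto (θ ∘ φ) atTop (nhds θstar)) :
    gradient R θstar = 0 := by
  obtain ⟨φ, hφ, hφlim⟩ := hacc
  obtain ⟨c, hc, hsmall⟩ := hbdd.exists_pos_forall_armijoCondition hRdiff hRlip hlam.2
  have hf1₀ : 0 < f1 := zero_lt_one.trans hf1
  set m := min ηinit (c / f1)
  have hm : 0 < m := lt_min hηinit (div_pos hc hf1₀)
  have hηm : ∀ n, m ≤ η n :=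
    min_le_of_backtracking (Accept := fun n t => ArmijoCondition R lam (θ n) t) hηinit hc hf1₀
      hf2.le (fun n t ht htc => hsmall _ (mem_range_self n) t ⟨ht.le, htc⟩)
      (fun n => (hbt n).imp fun _ hp => ⟨hp.1, hp.2.2⟩)
  have hdecrease (n : ℕ) : lam * m * ‖gradient R (θ n)‖ ^ 2 ≤ R (θ n) - R (θ (n + 1)) := by
    obtain ⟨p, -, hArmijo, -⟩ := hbt n
    have : lam * m * ‖gradient R (θ n)‖ ^ 2 ≤ lam * η n * ‖gradient R (θ n)‖ ^ 2 := by
      have hlam₀ : 0 ≤ lam := hlam.1.le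
      gcongr
      exact hηm n
    rw [hstep n]
    linarith
  have hRbdd : BddBelow (range fun n => R (θ n)) :=
    (hbdd.isCompact_closure.bddBelow_image hRdiff.continuous.continuousOn).mono <| by
      rintro _ ⟨n, rfl⟩
      exact mem_image_of_mem R (subset_closure (mem_range_self n))
  have hgrad : Tendsto (fun n => gradient R (θ n)) atTop (nhds 0) := by
    have hsq := tendsto_zero_of_mul_le_sub_succ (mul_pos hlam.1 hm) (fun n => sq_nonneg _)
      hdecrease hRbdd
    exact tendsto_zero_iff_norm_tendsto_zero.2 (by simpa using hsq.sqrt)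
  exact tendsto_nhds_unique ((hRlip.continuous.tendsto θstar).comp hφlim)
    (hgrad.comp hφ.tendsto_atTop)

/-- **GD limit set (Proposition: LCM backtracking gradient descent).**
If `R : ℝ^N → [0,∞)` is differentiable with locally Lipschitz gradient and `(θ_n)` is the
bounded sequence generated by the LCM backtracking algorithm applied to gradient descent,
then every accumulation point of `(θ_n)` is a critical point of `R`. -/
theorem lcm_gd_accumulation_points_are_critical
    {N : ℕ} (R : EuclideanSpace ℝ (Fin N) → ℝ)
    (hR0 : ∀ θ, 0 ≤ R θ)
    (hRdiff : Differentiable ℝ R)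
    (hRlip : LocallyLipschitz (gradient R))
    (lam ηinit f1 f2 : ℝ)
    (hlam : lam ∈ Set.Ioo (0 : ℝ) 1) (hηinit : 0 < ηinit) (hf1 : 1 < f1) (hf2 : 1 < f2)
    (θ : ℕ → EuclideanSpace ℝ (Fin N)) (η : ℕ → ℝ)
    (hstep : ∀ n, θ (n + 1) = θ n - η n • gradient R (θ n))
    -- LCM backtracking rule: `η n = f2 · η (n-1) · f1^(-p)` where `p` is the least `k`
    -- satisfying the Armijo condition (with the convention `η_{-1} = ηinit / f2`).
    (hbt : ∀ n, ∃ p : ℕ,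
      η n = (if n = 0 then ηinit else f2 * η (n - 1)) / f1 ^ p ∧
      (R (θ n - η n • gradient R (θ n)) - R (θ n) ≤ -lam * η n * ‖gradient R (θ n)‖ ^ 2) ∧
      (∀ k < p, ¬ (R (θ n - ((if n = 0 then ηinit else f2 * η (n - 1)) / f1 ^ k) • gradient R (θ n))
          - R (θ n) ≤
          -lam * ((if n = 0 then ηinit else f2 * η (n - 1)) / f1 ^ k) * ‖gradient R (θ n)‖ ^ 2)))
    (hbdd : Bornology.IsBounded (Set.range θ))
    (θstar : EuclideanSpace ℝ (Fin N))
    (hacc : ∃ φ : ℕ → ℕ, StrictMono φ ∧ Tendsto (θ ∘ φ) atTop (nhds θstar)) :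
    gradient R θstar = 0 :=
  lcm_gd_accumulation_points_are_critical_general R hRdiff hRlip lam ηinit f1 f2 hlam hηinit hf1 hf2
    θ η hstep hbt hbdd θstar hacc
end

section
/- There exists a continuous function s : ℝ^m \ Z → (0,∞) such that for every y ∈ ℝ^m \ Z and every η ∈ (0, s(y)], one has f(y,η) ≤ 0, i.e. V(y + η F(y)) − V(y) ≤ λ η V̇(y). -/
/-!
Where `V̇(x) < 0`, the slope `τ ↦ ∇V(y + τ F y)·F y - λ V̇(y)` of `η ↦ f(y, η)` is negative at
`(x, 0)`, where it equals `(1 - λ) V̇(x)`; by continuity it stays negative for `y` near `x` and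
`τ ∈ (0, δ]`, so by the mean value inequality `f(y, ·) ≤ 0` on `(0, δ]`. Thus every point of the
open set `V̇ ≠ 0` has a neighbourhood with a constant admissible step size, and since the admissible
step sizes at each point form an interval, a partition of unity glues these constants into a
continuous selection.
-/

open Filter

/-- The Lyapunov derivative `V̇(y) = ⟪∇V(y), F(y)⟫`. -/
noncomputable def lyapDeriv {m : ℕ}
    (F : EuclideanSpace ℝ (Fin m) → EuclideanSpace ℝ (Fin m))
    (V : EuclideanSpace ℝ (Fin m) → ℝ) (y : EuclideanSpace ℝ (Fin m)) : ℝ :=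
  inner ℝ (gradient V y) (F y)

open Set Topology

theorem exists_continuousOn_forall_mem_convex_of_local_const {X E : Type*} [PseudoMetricSpace X]
    [AddCommGroup E] [Module ℝ E] [TopologicalSpace E] [ContinuousAdd E] [ContinuousSMul ℝ E]
    {U : Set X} {t : X → Set E} (ht : ∀ x ∈ U, Convex ℝ (t x))
    (H : ∀ x ∈ U, ∃ c : E, ∀ᶠ y in 𝓝 x, c ∈ t y) :
    ∃ s : X → E, ContinuousOn s U ∧ ∀ x ∈ U, s x ∈ t x := by
  classical
  obtain ⟨g, hg⟩ := exists_continuous_forall_mem_convex_of_local_const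
    (t := fun x : U => t x) (fun x => ht x x.2) fun x =>
      let ⟨c, hc⟩ := H x x.2
      ⟨c, continuous_subtype_val.continuousAt.eventually hc⟩
  refine ⟨fun x => if hx : x ∈ U then g ⟨x, hx⟩ else 0, ?_,
    fun x hx => by simpa [hx] using hg ⟨x, hx⟩⟩
  rw [continuousOn_iff_continuous_domRestrict]
  convert g.continuous using 1
  funext x
  simp [x.2]

theorem Set.ordConnected_setOf_pos_forall_Ioc (p : ℝ → Prop) :
    OrdConnected {c : ℝ | 0 < c ∧ ∀ η ∈ Ioc 0 c, p η} :=
  ⟨fun _ ha _ hb _ hc =>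
    ⟨ha.1.trans_le hc.1, fun η hη => hb.2 η ⟨hη.1, hη.2.trans hc.2⟩⟩⟩

theorem exists_continuousOn_pos_forall_Ioc {X : Type*} [PseudoMetricSpace X] {U : Set X}
    {p : X → ℝ → Prop} (H : ∀ x ∈ U, ∃ δ > 0, ∀ᶠ y in 𝓝 x, ∀ η ∈ Ioc 0 δ, p y η) :
    ∃ s : X → ℝ, ContinuousOn s U ∧ ∀ x ∈ U, 0 < s x ∧ ∀ η ∈ Ioc 0 (s x), p x η :=
  exists_continuousOn_forall_mem_convex_of_local_const
    (fun x _ => (Set.ordConnected_setOf_pos_forall_Ioc (p x)).convex) fun x hx =>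
      let ⟨δ, hδ, hev⟩ := H x hx
      ⟨δ, hev.mono fun _ hy => ⟨hδ, hy⟩⟩

section Descent

variable {E : Type*} [NormedAddCommGroup E] [NormedSpace ℝ E] {V : E → ℝ}

theorem image_add_smul_sub_le_mul_of_fderiv_le {y v : E} {η c : ℝ} (hη : 0 ≤ η)
    (hV : Differentiable ℝ V)
    (hle : ∀ τ ∈ Ioo 0 η, fderiv ℝ V (y + τ • v) v ≤ c) :
    V (y + η • v) - V y ≤ c * η := by
  have hd : ∀ τ, HasDerivAt (fun τ : ℝ => V (y + τ • v)) (fderiv ℝ V (y + τ • v) v) τ :=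
    fun τ => (hV _).hasFDerivAt.comp_hasDerivAt τ
      (by simpa using ((hasDerivAt_id τ).smul_const v).const_add y)
  have := (convex_Icc 0 η).image_sub_le_mul_sub_of_deriv_le
    (fun τ _ => (hd τ).continuousAt.continuousWithinAt)
    (fun τ _ => (hd τ).differentiableAt.differentiableWithinAt)
    (fun τ hτ => (hd τ).deriv ▸ hle τ (by simpa using hτ)) 0 (by simp [hη]) η (by simp [hη]) hη
  simpa using this

theorem eventually_forall_Ioc_sub_le_mul_fderiv {F : E → E} {lam : ℝ} (hlam : lam < 1)
    (hF : Continuous F) (hV : ContDiff ℝ 1 V) {x : E} (hx : fderiv ℝ V x (F x) < 0) :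
    ∃ δ > 0, ∀ᶠ y in 𝓝 x, ∀ η ∈ Ioc 0 δ,
      V (y + η • F y) - V y ≤ lam * fderiv ℝ V y (F y) * η := by
  have hcont : Continuous fun p : E × ℝ =>
      fderiv ℝ V (p.1 + p.2 • F p.1) (F p.1) - lam * fderiv ℝ V p.1 (F p.1) := by
    have hDV := hV.continuous_fderiv one_ne_zero
    fun_prop
  have hslope_neg : fderiv ℝ V (x + (0:ℝ) • F x) (F x) - lam * fderiv ℝ V x (F x) < 0 := by
    simp only [zero_smul, add_zero]; nlinarith
  have hev := (hcont.tendsto (x, 0)).eventually (gt_mem_nhds hslope_neg)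
  rw [nhds_prod_eq] at hev
  obtain ⟨P, hP, Q, hQ, hPQ⟩ := eventually_prod_iff.1 hev
  obtain ⟨δ, hδ, hball⟩ := Metric.eventually_nhds_iff.1 hQ
  refine ⟨δ / 2, by positivity, hP.mono fun y hy η hη => ?_⟩
  refine image_add_smul_sub_le_mul_of_fderiv_le hη.1.le (hV.differentiable one_ne_zero)
    fun τ hτ => ?_
  have := hPQ hy (hball (show dist τ 0 < δ by
    rw [Real.dist_eq, sub_zero, abs_of_pos hτ.1]; linarith [hτ.2, hη.2]))
  linarith

end Descent

theorem lyapDeriv_eq_fderiv {m : ℕ} (F : EuclideanSpace ℝ (Fin m) → EuclideanSpace ℝ (Fin m))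
    (V : EuclideanSpace ℝ (Fin m) → ℝ) (y : EuclideanSpace ℝ (Fin m)) :
    lyapDeriv F V y = fderiv ℝ V y (F y) :=
  inner_gradient_left

theorem selection_theorem_general
    {m : ℕ} (lam : ℝ) (hlam : lam ∈ Set.Ioo (0 : ℝ) 1)
    (F : EuclideanSpace ℝ (Fin m) → EuclideanSpace ℝ (Fin m))
    (V : EuclideanSpace ℝ (Fin m) → ℝ)
    (hF : Continuous F) (hV : ContDiff ℝ 2 V)
    (hVdot : ∀ y, lyapDeriv F V y ≤ 0) :
    ∃ s : EuclideanSpace ℝ (Fin m) → ℝ,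
      ContinuousOn s {y | lyapDeriv F V y ≠ 0} ∧
      ∀ y, lyapDeriv F V y ≠ 0 →
        0 < s y ∧
        ∀ η : ℝ, 0 < η → η ≤ s y →
          V (y + η • F y) - V y - lam * η * lyapDeriv F V y ≤ 0 := by
  have hlocal : ∀ x ∈ {y | lyapDeriv F V y ≠ 0}, ∃ δ > 0, ∀ᶠ y in 𝓝 x, ∀ η ∈ Ioc 0 δ,
      V (y + η • F y) - V y ≤ lam * lyapDeriv F V y * η := by
    intro x (hx : lyapDeriv F V x ≠ 0)
    simp only [lyapDeriv_eq_fderiv] at hx hVdot ⊢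
    exact eventually_forall_Ioc_sub_le_mul_fderiv hlam.2 hF (hV.of_le one_le_two)
      ((hVdot x).lt_of_ne hx)
  obtain ⟨s, hs, hstep⟩ := exists_continuousOn_pos_forall_Ioc hlocal
  refine ⟨s, hs, fun y hy => ⟨(hstep y hy).1, fun η hη hηs => ?_⟩⟩
  linarith [(hstep y hy).2 η ⟨hη, hηs⟩]

/-- **Selection Theorem.** There is a continuous function `s : ℝ^m \ Z → (0,∞)` such that for
all `y ∉ Z` and all step sizes `η ∈ (0, s y]` the dissipation inequality
`f(y,η) = V (y + η • F y) - V y - λ η V̇(y) ≤ 0` holds, where `Z = {y | V̇(y) = 0}`. -/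
theorem selection_theorem
    {m : ℕ} (lam : ℝ) (hlam : lam ∈ Set.Ioo (0 : ℝ) 1)
    (F : EuclideanSpace ℝ (Fin m) → EuclideanSpace ℝ (Fin m))
    (V : EuclideanSpace ℝ (Fin m) → ℝ)
    (hF : Continuous F) (hV : ContDiff ℝ 2 V) (hV0 : ∀ y, 0 ≤ V y)
    (hVdot : ∀ y, lyapDeriv F V y ≤ 0) :
    ∃ s : EuclideanSpace ℝ (Fin m) → ℝ,
      ContinuousOn s {y | lyapDeriv F V y ≠ 0} ∧
      ∀ y, lyapDeriv F V y ≠ 0 →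
        0 < s y ∧
        ∀ η : ℝ, 0 < η → η ≤ s y →
          V (y + η • F y) - V y - lam * η * lyapDeriv F V y ≤ 0 :=
  selection_theorem_general lam hlam F V hF hV hVdot
end

section
/- For every y ∈ ℝ^m \ Z one has T(y) ⊆ I(y), and moreover I(y) is a bounded subset of (0,∞). -/
/-- `f(y,η) = V(y + η F(y)) − V(y) − λ η V̇(y)`. -/
noncomputable def armijoGap {m : ℕ}
    (F : EuclideanSpace ℝ (Fin m) → EuclideanSpace ℝ (Fin m))
    (V : EuclideanSpace ℝ (Fin m) → ℝ) (lam : ℝ)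
    (y : EuclideanSpace ℝ (Fin m)) (η : ℝ) : ℝ :=
  V (y + η • F y) - V y - lam * η * lyapDeriv F V y

/-- `g(y,x) = |F(y)ᵀ ∇²V(y + x F(y)) F(y)|`, with the Hessian realized as the derivative of
the gradient. -/
noncomputable def hessQuad {m : ℕ}
    (F : EuclideanSpace ℝ (Fin m) → EuclideanSpace ℝ (Fin m))
    (V : EuclideanSpace ℝ (Fin m) → ℝ) (y : EuclideanSpace ℝ (Fin m)) (x : ℝ) : ℝ :=
  |(inner ℝ (F y) ((fderiv ℝ (gradient V) (y + x • F y)) (F y)) : ℝ)|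

/-- `q(y,η) = η (max_{x ∈ [0,η]} g(y,x) + 1) + 2(1−λ) V̇(y)`. -/
noncomputable def qMaj {m : ℕ}
    (F : EuclideanSpace ℝ (Fin m) → EuclideanSpace ℝ (Fin m))
    (V : EuclideanSpace ℝ (Fin m) → ℝ) (lam : ℝ)
    (y : EuclideanSpace ℝ (Fin m)) (η : ℝ) : ℝ :=
  η * (sSup (hessQuad F V y '' Set.Icc 0 η) + 1) + 2 * (1 - lam) * lyapDeriv F V y

/-! Along the ray `t ↦ y + t F(y)`, the second-order Taylor bound with the Hessian term
dominated by `M = max_{[0,η]} g(y,·)` gives `f(y,η) ≤ η ((1-λ) V̇(y) + η M / 2) ≤ η q(y,η) / 2`,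
so `T(y) ⊆ I(y)`.
On `I(y)`, `λ η (-V̇(y)) ≤ V(y) - V(y + η F(y)) ≤ V(y)` because `V ≥ 0`, and `V̇(y) < 0` off `Z`;
hence `I(y) ⊆ [0, V(y) / (λ (-V̇(y)))]`. -/

open InnerProductSpace Set
open scoped Gradient RealInnerProductSpace

theorem sub_sub_mul_le_of_hasDerivAt_le {φ φ' φ'' : ℝ → ℝ} {M η : ℝ} (hη : 0 ≤ η)
    (hφ : ∀ t ∈ Icc 0 η, HasDerivAt φ (φ' t) t) (hφ' : ∀ t ∈ Icc 0 η, HasDerivAt φ' (φ'' t) t)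
    (hM : ∀ t ∈ Icc 0 η, φ'' t ≤ M) :
    φ η - φ 0 - η * φ' 0 ≤ M * η ^ 2 / 2 := by
  have h0 : (0 : ℝ) ∈ Icc 0 η := left_mem_Icc.2 hη
  have hslope : ∀ t ∈ Icc 0 η, φ' t - φ' 0 ≤ M * t := by
    have hanti : AntitoneOn (fun t => φ' t - M * t) (Icc 0 η) := by
      refine antitoneOn_of_hasDerivWithinAt_nonpos (convex_Icc 0 η) (f' := fun t => φ'' t - M)
        (fun t ht => ((hφ' t ht).continuousAt.sub (by fun_prop)).continuousWithinAt)
        (fun t ht => ?_) (fun t ht => ?_) <;> rw [interior_Icc] at ht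
      · simpa using ((hφ' t (Ioo_subset_Icc_self ht)).fun_sub
          ((hasDerivAt_id' t).const_mul M)).hasDerivWithinAt
      · exact sub_nonpos.2 (hM t (Ioo_subset_Icc_self ht))
    intro t ht
    have := hanti h0 ht ht.1
    simp only [mul_zero, sub_zero] at this
    linarith
  have hanti : AntitoneOn (fun t => φ t - (t * φ' 0 + M * t ^ 2 / 2)) (Icc 0 η) := by
    refine antitoneOn_of_hasDerivWithinAt_nonpos (convex_Icc 0 η)
      (f' := fun t => φ' t - (φ' 0 + M * t))
      (fun t ht => ((hφ t ht).continuousAt.sub (by fun_prop)).continuousWithinAt)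
      (fun t ht => ?_) (fun t ht => ?_) <;> rw [interior_Icc] at ht
    · have hpoly : HasDerivAt (fun t : ℝ => t * φ' 0 + M * t ^ 2 / 2) (φ' 0 + M * t) t := by
        refine (((hasDerivAt_id' t).mul_const (φ' 0)).fun_add
          (((hasDerivAt_pow 2 t).const_mul M).div_const 2)).congr_deriv ?_
        push_cast
        ring
      exact ((hφ t (Ioo_subset_Icc_self ht)).fun_sub hpoly).hasDerivWithinAt
    · linarith [hslope t (Ioo_subset_Icc_self ht)]
  have := hanti h0 (right_mem_Icc.2 hη) hη
  simp only [zero_mul, ne_eq, OfNat.ofNat_ne_zero, not_false_eq_true, zero_pow, mul_zero,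
    zero_div, add_zero, sub_zero] at this
  linarith

section LineRestriction

variable {E : Type*} [NormedAddCommGroup E] [InnerProductSpace ℝ E] [CompleteSpace E] {V : E → ℝ}

theorem ContDiff.gradient {m n : WithTop ℕ∞} (hV : ContDiff ℝ n V) (hmn : m + 1 ≤ n) :
    ContDiff ℝ m (∇ V) :=
  (toDual ℝ E).symm.contDiff.comp (hV.fderiv_right hmn)

theorem hasDerivAt_comp_add_smul (hV : Differentiable ℝ V) (y v : E) (t : ℝ) :
    HasDerivAt (fun t : ℝ => V (y + t • v)) ⟪∇ V (y + t • v), v⟫_ℝ t := by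
  rw [inner_gradient_left]
  exact (hV _).hasFDerivAt.comp_hasDerivAt t
    (by simpa using ((hasDerivAt_id t).smul_const v).const_add y)

theorem hasDerivAt_inner_gradient_comp_add_smul (hV : Differentiable ℝ (∇ V)) (y v : E) (t : ℝ) :
    HasDerivAt (fun t : ℝ => ⟪∇ V (y + t • v), v⟫_ℝ) ⟪fderiv ℝ (∇ V) (y + t • v) v, v⟫_ℝ t := by
  simpa using ((hV _).hasFDerivAt.comp_hasDerivAt t
    (by simpa using ((hasDerivAt_id t).smul_const v).const_add y)).inner ℝ (hasDerivAt_const t v)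

end LineRestriction

section Armijo

variable {m : ℕ} {F : EuclideanSpace ℝ (Fin m) → EuclideanSpace ℝ (Fin m)}
  {V : EuclideanSpace ℝ (Fin m) → ℝ} {lam : ℝ} {y : EuclideanSpace ℝ (Fin m)} {η : ℝ}

theorem continuous_hessQuad (hV : ContDiff ℝ 2 V) : Continuous (hessQuad F V y) :=
  ((innerSL ℝ (F y)).continuous.comp
    (((hV.gradient (m := 1) le_rfl).continuous_fderiv one_ne_zero).comp (by fun_prop)
      |>.clm_apply continuous_const)).abs

theorem sub_sub_mul_lyapDeriv_le (hV : ContDiff ℝ 2 V) (hη : 0 ≤ η) :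
    V (y + η • F y) - V y - η * lyapDeriv F V y ≤
      sSup (hessQuad F V y '' Icc 0 η) * η ^ 2 / 2 := by
  have hgrad : ContDiff ℝ 1 (∇ V) := hV.gradient le_rfl
  have hbdd : BddAbove (hessQuad F V y '' Icc 0 η) :=
    isCompact_Icc.bddAbove_image (continuous_hessQuad hV).continuousOn
  have := sub_sub_mul_le_of_hasDerivAt_le hη
    (fun t _ => hasDerivAt_comp_add_smul (hV.differentiable two_ne_zero) y (F y) t)
    (fun t _ =>
      hasDerivAt_inner_gradient_comp_add_smul (hgrad.differentiable one_ne_zero) y (F y) t)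
    (fun t ht => by
      rw [real_inner_comm]
      exact (le_abs_self _).trans (le_csSup hbdd (mem_image_of_mem (hessQuad F V y) ht)))
  simpa [lyapDeriv] using this

theorem armijoGap_nonpos_of_qMaj_nonpos (hV : ContDiff ℝ 2 V) (hη : 0 < η)
    (hq : qMaj F V lam y η ≤ 0) : armijoGap F V lam y η ≤ 0 := by
  have htaylor := sub_sub_mul_lyapDeriv_le (F := F) (y := y) hV hη.le
  have hscaled : η / 2 * qMaj F V lam y η ≤ 0 := mul_nonpos_of_nonneg_of_nonpos (by positivity) hq
  unfold armijoGap
  unfold qMaj at hscaled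
  nlinarith

theorem setOf_armijoGap_nonpos_subset_Icc (hlam : 0 < lam) (hV0 : ∀ x, 0 ≤ V x)
    (hL : lyapDeriv F V y < 0) :
    {η : ℝ | 0 < η ∧ armijoGap F V lam y η ≤ 0} ⊆ Icc 0 (V y / (lam * -lyapDeriv F V y)) := by
  rintro η ⟨hη, hf⟩
  refine ⟨hη.le, (le_div_iff₀ (mul_pos hlam (neg_pos.2 hL))).2 ?_⟩
  have := hV0 (y + η • F y)
  unfold armijoGap at hf
  linarith

end Armijo

theorem T_subset_I_and_I_bounded_general
    {m : ℕ} (lam : ℝ) (hlam : lam ∈ Set.Ioo (0 : ℝ) 1)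
    (F : EuclideanSpace ℝ (Fin m) → EuclideanSpace ℝ (Fin m))
    (V : EuclideanSpace ℝ (Fin m) → ℝ)
    (hV : ContDiff ℝ 2 V) (hV0 : ∀ y, 0 ≤ V y)
    (hVdot : ∀ y, lyapDeriv F V y ≤ 0)
    (y : EuclideanSpace ℝ (Fin m)) (hy : lyapDeriv F V y ≠ 0) :
    {η : ℝ | 0 < η ∧ qMaj F V lam y η ≤ 0} ⊆ {η : ℝ | 0 < η ∧ armijoGap F V lam y η ≤ 0} ∧
    Bornology.IsBounded {η : ℝ | 0 < η ∧ armijoGap F V lam y η ≤ 0} ∧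
    {η : ℝ | 0 < η ∧ armijoGap F V lam y η ≤ 0} ⊆ Set.Ioi 0 := by
  refine ⟨fun η ⟨hη, hq⟩ => ⟨hη, armijoGap_nonpos_of_qMaj_nonpos hV hη hq⟩, ?_, fun η hη => hη.1⟩
  exact (Metric.isBounded_Icc _ _).subset
    (setOf_armijoGap_nonpos_subset_Icc hlam.1 hV0 ((hVdot y).lt_of_ne hy))

/-- **Lemma (inclusion and boundedness).** For `y ∉ Z`, `T(y) ⊆ I(y)` and `I(y)` is a bounded
subset of `(0,∞)`, where `I(y) = {η > 0 | f(y,η) ≤ 0}` and `T(y) = {η > 0 | q(y,η) ≤ 0}`. -/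
theorem T_subset_I_and_I_bounded
    {m : ℕ} (lam : ℝ) (hlam : lam ∈ Set.Ioo (0 : ℝ) 1)
    (F : EuclideanSpace ℝ (Fin m) → EuclideanSpace ℝ (Fin m))
    (V : EuclideanSpace ℝ (Fin m) → ℝ)
    (hF : Continuous F) (hV : ContDiff ℝ 2 V) (hV0 : ∀ y, 0 ≤ V y)
    (hVdot : ∀ y, lyapDeriv F V y ≤ 0)
    (y : EuclideanSpace ℝ (Fin m)) (hy : lyapDeriv F V y ≠ 0) :
    {η : ℝ | 0 < η ∧ qMaj F V lam y η ≤ 0} ⊆ {η : ℝ | 0 < η ∧ armijoGap F V lam y η ≤ 0} ∧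
    Bornology.IsBounded {η : ℝ | 0 < η ∧ armijoGap F V lam y η ≤ 0} ∧
    {η : ℝ | 0 < η ∧ armijoGap F V lam y η ≤ 0} ⊆ Set.Ioi 0 :=
  T_subset_I_and_I_bounded_general lam hlam F V hV hV0 hVdot y hy
end

section
/- Let 𝒪 ⊆ ℝ^m be open and q : 𝒪 × (0,∞) → ℝ be such that (1) for every y ∈ (0,∞), the map x ↦ q(x,y) is continuous on 𝒪, and (2) for every x ∈ 𝒪, the map y ↦ q(x,y) is continuous and strictly increasing on (0,∞). If (a,b) ∈ 𝒪 × (0,∞) satisfies q(a,b) = 0, then there exist a neighborhood 𝒱 ⊆ 𝒪 of a and a continuous map φ : 𝒱 → (0,∞) such that for all x ∈ 𝒱 and all y ∈ (0,∞): q(x,y) = 0 if and only if y = φ(x). -/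
/-- **Increasing implicit function lemma.** Let `q : 𝒪 × (0,∞) → ℝ` be separately continuous
in the first variable and continuous and strictly increasing in the second. If `q a b = 0`
with `a ∈ 𝒪`, `b > 0`, then there is a neighborhood `𝒱 ⊆ 𝒪` of `a` and a continuous
`φ : 𝒱 → (0,∞)` such that, on `𝒱 × (0,∞)`, `q x y = 0 ↔ y = φ x`. -/
theorem increasing_implicit_function
    {m : ℕ} (O : Set (EuclideanSpace ℝ (Fin m))) (hO : IsOpen O)
    (q : EuclideanSpace ℝ (Fin m) → ℝ → ℝ)
    (hqx : ∀ y : ℝ, 0 < y → ContinuousOn (fun x => q x y) O)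
    (hqy_cont : ∀ x ∈ O, ContinuousOn (q x) (Set.Ioi 0))
    (hqy_mono : ∀ x ∈ O, StrictMonoOn (q x) (Set.Ioi 0))
    (a : EuclideanSpace ℝ (Fin m)) (b : ℝ) (ha : a ∈ O) (hb : 0 < b) (hab : q a b = 0) :
    ∃ 𝒱 ∈ nhds a, 𝒱 ⊆ O ∧
      ∃ φ : EuclideanSpace ℝ (Fin m) → ℝ,
        ContinuousOn φ 𝒱 ∧ (∀ x ∈ 𝒱, 0 < φ x) ∧
        ∀ x ∈ 𝒱, ∀ y : ℝ, 0 < y → (q x y = 0 ↔ y = φ x) := by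
  set b₁ : ℝ := b / 2 with hb₁def
  set b₂ : ℝ := b + 1 with hb₂def
  have hb₁ : (0:ℝ) < b₁ := by positivity
  have hb₁b : b₁ < b := by simp only [hb₁def]; linarith
  have hbb₂ : b < b₂ := by simp only [hb₂def]; linarith
  have hb₂ : (0:ℝ) < b₂ := lt_trans hb hbb₂
  have h1 : q a b₁ < 0 := by
    have := hqy_mono a ha hb₁ hb hb₁b
    rwa [hab] at this
  have h2 : 0 < q a b₂ := by
    have := hqy_mono a ha hb hb₂ hbb₂
    rwa [hab] at this
  -- the neighborhood
  set V : Set (EuclideanSpace ℝ (Fin m)) :=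
    (O ∩ (fun x => q x b₁) ⁻¹' Set.Iio 0) ∩ (O ∩ (fun x => q x b₂) ⁻¹' Set.Ioi 0) with hVdef
  have hVopen : IsOpen V :=
    ((hqx b₁ hb₁).isOpen_inter_preimage hO isOpen_Iio).inter
      ((hqx b₂ hb₂).isOpen_inter_preimage hO isOpen_Ioi)
  have haV : a ∈ V := ⟨⟨ha, h1⟩, ⟨ha, h2⟩⟩
  have hVO : V ⊆ O := fun x hx => hx.1.1
  have hV1 : ∀ x ∈ V, q x b₁ < 0 := fun x hx => hx.1.2
  have hV2 : ∀ x ∈ V, 0 < q x b₂ := fun x hx => hx.2.2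
  -- existence of a zero
  have hIcc : Set.Icc b₁ b₂ ⊆ Set.Ioi 0 := fun y hy => lt_of_lt_of_le hb₁ hy.1
  have hex : ∀ x ∈ V, ∃ y, y ∈ Set.Icc b₁ b₂ ∧ q x y = 0 := by
    intro x hx
    have hc : ContinuousOn (q x) (Set.Icc b₁ b₂) := (hqy_cont x (hVO hx)).mono hIcc
    have := intermediate_value_Icc (le_of_lt (lt_trans hb₁b hbb₂)) hc
      (Set.mem_Icc.2 ⟨le_of_lt (hV1 x hx), le_of_lt (hV2 x hx)⟩)
    obtain ⟨y, hy, hqy⟩ := this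
    exact ⟨y, hy, hqy⟩
  classical
  set φ : EuclideanSpace ℝ (Fin m) → ℝ :=
    fun x => if h : ∃ y, y ∈ Set.Icc b₁ b₂ ∧ q x y = 0 then h.choose else b with hφdef
  have hφ_spec : ∀ x ∈ V, φ x ∈ Set.Icc b₁ b₂ ∧ q x (φ x) = 0 := by
    intro x hx
    have h := hex x hx
    simp only [hφdef, dif_pos h]
    exact h.choose_spec
  have hφ_pos : ∀ x ∈ V, 0 < φ x := fun x hx => lt_of_lt_of_le hb₁ (hφ_spec x hx).1.1
  -- uniqueness of zeros
  have huniq : ∀ x ∈ O, ∀ y ∈ Set.Ioi (0:ℝ), ∀ z ∈ Set.Ioi (0:ℝ),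
      q x y = 0 → q x z = 0 → y = z := by
    intro x hx y hy z hz hqy hqz
    exact (hqy_mono x hx).injOn hy hz (by rw [hqy, hqz])
  refine ⟨V, hVopen.mem_nhds haV, hVO, φ, ?_, hφ_pos, ?_⟩
  · -- continuity
    intro x₀ hx₀
    rw [ContinuousWithinAt, Metric.tendsto_nhds]
    intro ε hε
    set ε' : ℝ := min ε (φ x₀ / 2) with hε'def
    have hε' : 0 < ε' := lt_min hε (by have := hφ_pos x₀ hx₀; positivity)
    set c₁ : ℝ := φ x₀ - ε' with hc₁def
    set c₂ : ℝ := φ x₀ + ε' with hc₂def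
    have hφ0 := hφ_pos x₀ hx₀
    have hc₁pos : 0 < c₁ := by
      have : ε' ≤ φ x₀ / 2 := min_le_right _ _
      simp only [hc₁def]; linarith
    have hc₂pos : 0 < c₂ := by simp only [hc₂def]; linarith
    have hc₁lt : c₁ < φ x₀ := by simp only [hc₁def]; linarith
    have hc₂gt : φ x₀ < c₂ := by simp only [hc₂def]; linarith
    have hq0 := (hφ_spec x₀ hx₀).2
    have hqc₁ : q x₀ c₁ < 0 := by
      have := hqy_mono x₀ (hVO hx₀) hc₁pos hφ0 hc₁lt
      rwa [hq0] at this
    have hqc₂ : 0 < q x₀ c₂ := by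
      have := hqy_mono x₀ (hVO hx₀) hφ0 hc₂pos hc₂gt
      rwa [hq0] at this
    set W : Set (EuclideanSpace ℝ (Fin m)) :=
      (O ∩ (fun x => q x c₁) ⁻¹' Set.Iio 0) ∩ (O ∩ (fun x => q x c₂) ⁻¹' Set.Ioi 0) with hWdef
    have hWopen : IsOpen W :=
      ((hqx c₁ hc₁pos).isOpen_inter_preimage hO isOpen_Iio).inter
        ((hqx c₂ hc₂pos).isOpen_inter_preimage hO isOpen_Ioi)
    have hx₀W : x₀ ∈ W := ⟨⟨hVO hx₀, hqc₁⟩, ⟨hVO hx₀, hqc₂⟩⟩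
    have hWnhds : W ∈ nhdsWithin x₀ V :=
      nhdsWithin_le_nhds (hWopen.mem_nhds hx₀W)
    filter_upwards [hWnhds, self_mem_nhdsWithin] with x hxW hxV
    have hφx_pos := hφ_pos x hxV
    have hqφx := (hφ_spec x hxV).2
    have hmono := (hqy_mono x (hVO hxV)).monotoneOn
    have h₁ : c₁ < φ x := by
      by_contra h
      push_neg at h
      have := hmono hφx_pos hc₁pos h
      rw [hqφx] at this
      exact absurd (lt_of_le_of_lt this hxW.1.2) (lt_irrefl 0)
    have h₂ : φ x < c₂ := by
      by_contra h
      push_neg at h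
      have := hmono hc₂pos hφx_pos h
      rw [hqφx] at this
      exact absurd (lt_of_lt_of_le hxW.2.2 this) (lt_irrefl 0)
    have : |φ x - φ x₀| < ε' := by
      rw [abs_lt]
      constructor <;> simp only [hc₁def, hc₂def] at h₁ h₂ <;> linarith
    calc dist (φ x) (φ x₀) = |φ x - φ x₀| := Real.dist_eq _ _
      _ < ε' := this
      _ ≤ ε := min_le_left _ _
  · intro x hx y hy
    constructor
    · intro hqy
      exact huniq x (hVO hx) y hy (φ x) (hφ_pos x hx) hqy (hφ_spec x hx).2
    · intro h; rw [h]; exact (hφ_spec x hx).2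
end

section
/- Let y* ∈ ℝ^m be an equilibrium, i.e. F(y*) = 0. Assume that V is differentiable on ℝ^m, that V(y*) = 0, that V is positive definite on some ball B_r(y*) (V(y) > 0 for y ∈ B_r(y*), y ≠ y*), and that V̇(y) ≤ 0 for all y ∈ B_r(y*). Then y* is a stable equilibrium of the LCR algorithm: for every ε > 0 there exists γ > 0 such that ‖y_0 − y*‖ < γ implies ‖h^n(y_0) − y*‖ < ε for all n ≥ 0, where h^n denotes the n-fold composition of the LCR update map h. -/
/-!
`V` is a discrete Lyapunov function for the LCR map `h`: the Armijo condition together with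
`V̇ ≤ 0` gives `V (h y) ≤ V y` near `y*`. Although `h` is discontinuous in general, it is
continuous at the equilibrium, since its step `η̃(y) F(y)` is bounded by `η₀ ‖F y‖ → 0`. These
are the hypotheses of the discrete Lyapunov stability argument: `V` is bounded below by some
`c > 0` on a compact annulus around `y*`, and the orbit of a point where `V < c`, once it is close
enough to `y*` that one step cannot jump over the annulus, never reaches the annulus.
-/

open Filter Metric Set Topology

lemma exists_pos_le_on_annulus {X : Type*} [MetricSpace X] [ProperSpace X]
    {V : X → ℝ} {x : X} {r δ ρ : ℝ} (hρr : ρ < r) (hδ : 0 < δ)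
    (hV : ContinuousOn V (ball x r)) (hVpos : ∀ y ∈ ball x r, y ≠ x → 0 < V y) :
    ∃ c > 0, ∀ y, δ ≤ dist y x → dist y x ≤ ρ → c ≤ V y := by
  have hsub : closedBall x ρ ∩ (ball x δ)ᶜ ⊆ ball x r := fun y hy =>
    mem_ball.2 ((mem_closedBall.1 hy.1).trans_lt hρr)
  obtain ⟨c, hc, hcV⟩ := ((isCompact_closedBall x ρ).inter_right isOpen_ball.isClosed_compl)
    |>.exists_forall_le' (hV.mono hsub) fun y hy =>
      hVpos y (hsub hy) fun hyx => hy.2 (by simpa [hyx] using hδ)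
  exact ⟨c, hc, fun y hδy hyρ => hcV y ⟨mem_closedBall.2 hyρ, by simpa using hδy⟩⟩

lemma stable_iterate_of_lyapunov {X : Type*} [MetricSpace X] [ProperSpace X]
    {h : X → X} {V : X → ℝ} {x : X} {r : ℝ} (hr : 0 < r)
    (hfix : h x = x) (hcont : ContinuousAt h x)
    (hV : ContinuousOn V (ball x r)) (hVx : V x = 0)
    (hVpos : ∀ y ∈ ball x r, y ≠ x → 0 < V y) (hdesc : ∀ y ∈ ball x r, V (h y) ≤ V y) :
    ∀ ε > 0, ∃ γ > 0, ∀ y₀, dist y₀ x < γ → ∀ n, dist (h^[n] y₀) x < ε := by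
  intro ε hε
  set ρ := min ε (r / 2)
  have hρ : 0 < ρ := lt_min hε (half_pos hr)
  have hρr : ρ < r := (min_le_right _ _).trans_lt (half_lt_self hr)
  obtain ⟨δ₀, hδ₀, hhδ₀⟩ := Metric.continuousAt_iff.1 hcont ρ hρ
  set δ := min δ₀ ρ
  have hδ : 0 < δ := lt_min hδ₀ hρ
  have hδρ : δ ≤ ρ := min_le_right _ _
  have hstep : ∀ y, dist y x < δ → dist (h y) x < ρ := fun y hy => by
    simpa [hfix] using hhδ₀ (hy.trans_le (min_le_left _ _))
  obtain ⟨c, hc, hcV⟩ := exists_pos_le_on_annulus hρr hδ hV hVpos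
  obtain ⟨γ₀, hγ₀, hVγ₀⟩ := Metric.continuousAt_iff.1
    (hV.continuousAt (ball_mem_nhds x hr)) c hc
  -- The sublevel set `{V < c}` near `x` is invariant: one step stays inside the ball of radius
  -- `ρ`, and cannot land on the annulus `δ ≤ dist · x ≤ ρ`, where `V ≥ c`.
  set U := {y | dist y x < δ ∧ V y < c}
  have hU : MapsTo h U U := fun y ⟨hyδ, hyc⟩ => by
    have hVhy : V (h y) < c :=
      (hdesc y (mem_ball.2 (hyδ.trans_le (hδρ.trans hρr.le)))).trans_lt hyc
    exact ⟨not_le.1 fun hδhy => (hcV _ hδhy (hstep y hyδ).le).not_gt hVhy, hVhy⟩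
  refine ⟨min γ₀ δ, lt_min hγ₀ hδ, fun y₀ hy₀ n => ?_⟩
  have hy₀U : y₀ ∈ U := ⟨hy₀.trans_le (min_le_right _ _), by
    simpa [hVx] using (le_abs_self _).trans_lt (hVγ₀ (hy₀.trans_le (min_le_left _ _)))⟩
  exact ((hU.iterate n hy₀U).1.trans_le hδρ).trans_le (min_le_left _ _)

lemma continuousAt_add_smul_of_abs_le {E : Type*} [NormedAddCommGroup E] [NormedSpace ℝ E]
    {F : E → E} {η : E → ℝ} {x : E} {η₀ : ℝ} (hF : ContinuousAt F x) (hFx : F x = 0)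
    (hη : ∀ y, |η y| ≤ η₀) : ContinuousAt (fun y => y + η y • F y) x := by
  have hstep : Tendsto (fun y => η y • F y) (𝓝 x) (𝓝 0) := by
    refine squeeze_zero_norm (fun y => ?_) (by simpa [hFx] using (hF.norm.const_mul η₀).tendsto)
    rw [norm_smul, Real.norm_eq_abs]
    exact mul_le_mul_of_nonneg_right (hη y) (norm_nonneg _)
  simpa [ContinuousAt, hFx] using tendsto_id.add hstep

lemma le_of_armijoGap_nonpos {m : ℕ} {F : EuclideanSpace ℝ (Fin m) → EuclideanSpace ℝ (Fin m)}
    {V : EuclideanSpace ℝ (Fin m) → ℝ} {lam η : ℝ} {y : EuclideanSpace ℝ (Fin m)}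
    (hlam : 0 ≤ lam) (hη : 0 ≤ η) (hgap : armijoGap F V lam y η ≤ 0)
    (hVdot : lyapDeriv F V y ≤ 0) : V (y + η • F y) ≤ V y := by
  have : lam * η * lyapDeriv F V y ≤ 0 := mul_nonpos_of_nonneg_of_nonpos (by positivity) hVdot
  unfold armijoGap at hgap
  linarith

lemma div_pow_mem_Ioc {η₀ f : ℝ} (hη₀ : 0 < η₀) (hf : 1 < f) (p : ℕ) :
    η₀ / f ^ p ∈ Ioc 0 η₀ :=
  ⟨div_pos hη₀ (pow_pos (zero_lt_one.trans hf) p), div_le_self hη₀.le (one_le_pow₀ hf.le)⟩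

theorem lcr_stability_general
    {m : ℕ} (lam η0 f1 : ℝ)
    (hlam : lam ∈ Set.Ioo (0 : ℝ) 1) (hη0 : 0 < η0) (hf1 : 1 < f1)
    (F : EuclideanSpace ℝ (Fin m) → EuclideanSpace ℝ (Fin m))
    (V : EuclideanSpace ℝ (Fin m) → ℝ)
    (hF : Continuous F) (hV : Differentiable ℝ V)
    (etat : EuclideanSpace ℝ (Fin m) → ℝ)
    (hetat : ∀ y, ∃ p : ℕ, etat y = η0 / f1 ^ p ∧
      armijoGap F V lam y (etat y) ≤ 0 ∧
      ∀ k < p, ¬ armijoGap F V lam y (η0 / f1 ^ k) ≤ 0)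
    (h : EuclideanSpace ℝ (Fin m) → EuclideanSpace ℝ (Fin m))
    (hh : ∀ y, h y = y + etat y • F y)
    (ystar : EuclideanSpace ℝ (Fin m)) (hFstar : F ystar = 0)
    (r : ℝ) (hr : 0 < r)
    (hVstar : V ystar = 0)
    (hVpos : ∀ y ∈ Metric.ball ystar r, y ≠ ystar → 0 < V y)
    (hVdotneg : ∀ y ∈ Metric.ball ystar r, lyapDeriv F V y ≤ 0) :
    ∀ ε > 0, ∃ γ > 0, ∀ y0 : EuclideanSpace ℝ (Fin m),
      ‖y0 - ystar‖ < γ → ∀ n : ℕ, ‖h^[n] y0 - ystar‖ < ε := by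
  have hstep : ∀ y, etat y ∈ Ioc 0 η0 := fun y => by
    obtain ⟨p, hp, -⟩ := hetat y
    exact hp ▸ div_pow_mem_Ioc hη0 hf1 p
  have hh' : h = fun y => y + etat y • F y := funext hh
  have hfix : h ystar = ystar := by simp [hh, hFstar]
  have hcont : ContinuousAt h ystar := hh' ▸ continuousAt_add_smul_of_abs_le hF.continuousAt
    hFstar fun y => (abs_of_pos (hstep y).1).trans_le (hstep y).2
  have hdesc : ∀ y ∈ ball ystar r, V (h y) ≤ V y := fun y hy => by
    obtain ⟨p, -, hgap, -⟩ := hetat y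
    exact hh y ▸ le_of_armijoGap_nonpos hlam.1.le (hstep y).1.le hgap (hVdotneg y hy)
  simpa only [dist_eq_norm] using stable_iterate_of_lyapunov hr hfix hcont
    hV.continuous.continuousOn hVstar hVpos hdesc

/-- **Stability Theorem for LCR.** Let `y*` be an equilibrium (`F y* = 0`), `V` differentiable
with `V y* = 0`, `V` positive definite on a ball `B_r(y*)` and `V̇ ≤ 0` there. Then `y*` is a
stable equilibrium of the LCR update map `h y = y + η̃(y) F y`, where `η̃(y) = η₀ f1^{-p(y)}`
and `p(y)` is the least `k` with `f(y, η₀ f1^{-k}) ≤ 0`. -/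
theorem lcr_stability
    {m : ℕ} (lam η0 f1 : ℝ)
    (hlam : lam ∈ Set.Ioo (0 : ℝ) 1) (hη0 : 0 < η0) (hf1 : 1 < f1)
    (F : EuclideanSpace ℝ (Fin m) → EuclideanSpace ℝ (Fin m))
    (V : EuclideanSpace ℝ (Fin m) → ℝ)
    (hF : Continuous F) (hV : Differentiable ℝ V) (hV0 : ∀ y, 0 ≤ V y)
    (etat : EuclideanSpace ℝ (Fin m) → ℝ)
    (hetat : ∀ y, ∃ p : ℕ, etat y = η0 / f1 ^ p ∧
      armijoGap F V lam y (etat y) ≤ 0 ∧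
      ∀ k < p, ¬ armijoGap F V lam y (η0 / f1 ^ k) ≤ 0)
    (h : EuclideanSpace ℝ (Fin m) → EuclideanSpace ℝ (Fin m))
    (hh : ∀ y, h y = y + etat y • F y)
    (ystar : EuclideanSpace ℝ (Fin m)) (hFstar : F ystar = 0)
    (r : ℝ) (hr : 0 < r)
    (hVstar : V ystar = 0)
    (hVpos : ∀ y ∈ Metric.ball ystar r, y ≠ ystar → 0 < V y)
    (hVdotneg : ∀ y ∈ Metric.ball ystar r, lyapDeriv F V y ≤ 0) :
    ∀ ε > 0, ∃ γ > 0, ∀ y0 : EuclideanSpace ℝ (Fin m),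
      ‖y0 - ystar‖ < γ → ∀ n : ℕ, ‖h^[n] y0 - ystar‖ < ε :=
  lcr_stability_general lam η0 f1 hlam hη0 hf1 F V hF hV etat hetat h hh ystar hFstar r hr hVstar
    hVpos hVdotneg
end

section
/- Let V : ℝ^m → [0,∞) be continuous, radially unbounded (V(y) → +∞ as ‖y‖ → ∞), and such that G = V^{-1}({0}) is nonempty and is the set of global minima of V. Then G is compact, and there exist continuous strictly increasing functions α₁, α₂ : [0,∞) → [0,∞) with α₁(0) = α₂(0) = 0 such that α₁(dist(y,G)) ≤ V(y) ≤ α₂(dist(y,G)) for all y ∈ ℝ^m. -/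
/-!
`G` is a closed subset of the sublevel set `{V ≤ 0}`, which radial unboundedness makes compact.
Both bounds come from monotone envelopes of `V` as a function of `d = dist(·, G)`: the lower one
`c r = inf {V y | r ≤ d y}` is positive for `r > 0` because `V` attains a positive minimum on the
compact part `{r ≤ d, V ≤ 1}` of `{r ≤ d}`, and the upper one `M r = sup {V y | d y ≤ r}` is finite
because `{d ≤ r}` is compact and tends to `0` as `r → 0` because `V` is continuous and vanishes on
the compact set `G`. A monotone `f` is made continuous by averaging over dilations,
`r ↦ ∫ t in a..b, f (r * t) = r⁻¹ ∫ x in r*a..r*b, f x`, which is squeezed between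
`(b - a) f (r a)` and `(b - a) f (r b)`; adding `r`, resp. multiplying by `r / (1 + r)`, then makes
it strictly increasing.
-/

open Metric Set Filter Topology MeasureTheory intervalIntegral

structure IsClassK (α : ℝ → ℝ) : Prop where
  continuousOn : ContinuousOn α (Ici 0)
  strictMonoOn : StrictMonoOn α (Ici 0)
  map_zero : α 0 = 0

theorem IsClassK.nonneg {α : ℝ → ℝ} (hα : IsClassK α) {r : ℝ} (hr : 0 ≤ r) : 0 ≤ α r :=
  hα.map_zero ▸ hα.strictMonoOn.monotoneOn self_mem_Ici hr hr

section DilationIntegral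

variable {f : ℝ → ℝ} {a b r : ℝ}

theorem Monotone.le_integral_comp_mul (hf : Monotone f) (hab : a ≤ b) (hr : 0 ≤ r) :
    (b - a) * f (r * a) ≤ ∫ t in a..b, f (r * t) := by
  calc (b - a) * f (r * a) = ∫ _ in a..b, f (r * a) := by simp
    _ ≤ ∫ t in a..b, f (r * t) :=
      integral_mono_on hab intervalIntegrable_const
        (hf.comp (monotone_mul_left_of_nonneg hr)).intervalIntegrable
        fun t ht => hf (mul_le_mul_of_nonneg_left ht.1 hr)

theorem Monotone.integral_comp_mul_le (hf : Monotone f) (hab : a ≤ b) (hr : 0 ≤ r) :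
    ∫ t in a..b, f (r * t) ≤ (b - a) * f (r * b) := by
  calc ∫ t in a..b, f (r * t) ≤ ∫ _ in a..b, f (r * b) :=
      integral_mono_on hab
        (hf.comp (monotone_mul_left_of_nonneg hr)).intervalIntegrable
        intervalIntegrable_const fun t ht => hf (mul_le_mul_of_nonneg_left ht.2 hr)
    _ = (b - a) * f (r * b) := by simp

theorem Monotone.monotoneOn_integral_comp_mul (hf : Monotone f) (ha : 0 ≤ a) (hab : a ≤ b) :
    MonotoneOn (fun r => ∫ t in a..b, f (r * t)) (Ici 0) := by
  intro r hr s hs hrs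
  exact integral_mono_on hab
    (hf.comp (monotone_mul_left_of_nonneg hr)).intervalIntegrable
    (hf.comp (monotone_mul_left_of_nonneg hs)).intervalIntegrable
    fun t ht => hf (mul_le_mul_of_nonneg_right hrs (ha.trans ht.1))

theorem continuousAt_integral_comp_mul (hf : ∀ u v, IntervalIntegrable f volume u v)
    (a b : ℝ) (hr : r ≠ 0) : ContinuousAt (fun r => ∫ t in a..b, f (r * t)) r := by
  have hF := continuous_primitive hf 0
  have hcont : ContinuousAt
      (fun r => r⁻¹ * ((∫ x in 0..r * b, f x) - ∫ x in 0..r * a, f x)) r :=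
    (continuousAt_inv₀ hr).mul ((hF.comp (continuous_mul_const b)).sub
      (hF.comp (continuous_mul_const a))).continuousAt
  refine hcont.congr ((eventually_ne_nhds hr).mono fun s hs => ?_)
  simp only [integral_comp_mul_left _ hs, smul_eq_mul,
    integral_interval_sub_left (hf _ _) (hf _ _)]

theorem Monotone.continuousOn_integral_comp_mul (hf : Monotone f)
    (hf0 : ContinuousWithinAt f (Ici 0) 0) (ha : 0 ≤ a) (hab : a ≤ b) :
    ContinuousOn (fun r => ∫ t in a..b, f (r * t)) (Ici 0) := by
  intro r hr
  rcases (mem_Ici.1 hr).eq_or_lt with rfl | hr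
  · have hlim : ∀ c, 0 ≤ c → Tendsto (fun r => (b - a) * f (r * c)) (𝓝[≥] 0)
        (𝓝 ((b - a) * f 0)) := fun c hc => by
      have : Tendsto (fun r => r * c) (𝓝[≥] 0) (𝓝[≥] 0) :=
        tendsto_nhdsWithin_of_tendsto_nhds_of_eventually_within _
          (((continuous_mul_const c).tendsto' 0 0 (zero_mul c)).mono_left nhdsWithin_le_nhds)
          (eventually_mem_nhdsWithin.mono fun r hr => mul_nonneg hr hc)
      exact (hf0.tendsto.comp this).const_mul _
    refine tendsto_of_tendsto_of_tendsto_of_le_of_le' ?_ ?_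
      (eventually_mem_nhdsWithin.mono fun r hr => hf.le_integral_comp_mul hab hr)
      (eventually_mem_nhdsWithin.mono fun r hr => hf.integral_comp_mul_le hab hr)
    · simpa using hlim a ha
    · simpa using hlim b (ha.trans hab)
  · exact (continuousAt_integral_comp_mul (fun u v => hf.intervalIntegrable) a b
      hr.ne').continuousWithinAt

end DilationIntegral

theorem Monotone.exists_isClassK_le {f : ℝ → ℝ} (hf : Monotone f) (hf0 : 0 ≤ f 0)
    (hpos : ∀ r, 0 < r → 0 < f r) : ∃ α, IsClassK α ∧ ∀ r, 0 ≤ r → α r ≤ f r := by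
  set g : ℝ → ℝ := fun r => min (f r) r
  have hg : Monotone g := fun r s h => min_le_min (hf h) h
  have hg0 : g 0 = 0 := min_eq_right hf0
  have hg_cont : ContinuousWithinAt g (Ici 0) 0 := by
    rw [ContinuousWithinAt, hg0]
    exact tendsto_of_tendsto_of_tendsto_of_le_of_le' tendsto_const_nhds
      (tendsto_id.mono_left nhdsWithin_le_nhds)
      (eventually_mem_nhdsWithin.mono fun r hr => hg0 ▸ hg hr)
      (Eventually.of_forall fun r => min_le_right _ _)
  set β : ℝ → ℝ := fun r => ∫ t in (2⁻¹ : ℝ)..1, g (r * t)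
  have hβ_mono : MonotoneOn β (Ici 0) :=
    hg.monotoneOn_integral_comp_mul (by norm_num) (by norm_num)
  have hβ_le : ∀ r, 0 ≤ r → β r ≤ f r := fun r hr => by
    have hβg := hg.integral_comp_mul_le (a := 2⁻¹) (b := 1) (by norm_num) hr
    rw [mul_one] at hβg
    have hg_nonneg : 0 ≤ g r := hg0 ▸ hg hr
    calc β r ≤ (1 - 2⁻¹) * g r := hβg
      _ ≤ g r := by linarith
      _ ≤ f r := min_le_left _ _
  -- averaging over `[1/2, 1]` rather than `[0, 1]` keeps `β` away from `0` for `r > 0`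
  have hβ_pos : ∀ r, 0 < r → 0 < β r := fun r hr => by
    have hg_pos : 0 < g (r * 2⁻¹) := lt_min (hpos _ (by positivity)) (by positivity)
    exact (mul_pos (by norm_num) hg_pos).trans_le
      (hg.le_integral_comp_mul (by norm_num) hr.le)
  have hβ_nonneg : ∀ r, 0 ≤ r → 0 ≤ β r := fun r hr => by
    rcases hr.eq_or_lt with rfl | hr
    · simp [β, hg0]
    · exact (hβ_pos r hr).le
  refine ⟨fun r => r / (1 + r) * β r, ⟨?_, ?_, by simp⟩, fun r hr => ?_⟩
  · refine ContinuousOn.mul (continuousOn_id.div (continuousOn_const.add continuousOn_id)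
      fun r hr => (add_pos_of_pos_of_nonneg one_pos hr).ne')
      (hg.continuousOn_integral_comp_mul hg_cont (by norm_num) (by norm_num))
  · intro a ha b hb hab
    have ha : (0 : ℝ) ≤ a := ha
    have hb : (0 : ℝ) ≤ b := hb
    have hfrac : a / (1 + a) < b / (1 + b) := by
      rw [div_lt_div_iff₀ (by positivity) (by positivity)]; linarith
    calc a / (1 + a) * β a ≤ a / (1 + a) * β b := by gcongr; exact hβ_mono ha hb hab.le
      _ < b / (1 + b) * β b := by gcongr; exact hβ_pos b (ha.trans_lt hab)
  · calc r / (1 + r) * β r ≤ β r :=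
          mul_le_of_le_one_left (hβ_nonneg r hr) ((div_le_one (by positivity)).2 (by linarith))
      _ ≤ f r := hβ_le r hr

theorem Monotone.exists_isClassK_ge {f : ℝ → ℝ} (hf : Monotone f) (hf0 : f 0 = 0)
    (hcont : ContinuousWithinAt f (Ici 0) 0) : ∃ α, IsClassK α ∧ ∀ r, 0 ≤ r → f r ≤ α r := by
  refine ⟨fun r => r + ∫ t in (1 : ℝ)..2, f (r * t), ⟨?_, ?_, by simp [hf0]⟩, fun r hr => ?_⟩
  · exact continuousOn_id.add
      (hf.continuousOn_integral_comp_mul hcont zero_le_one one_le_two)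
  · exact fun a ha b hb hab => add_lt_add_of_lt_of_le hab
      (hf.monotoneOn_integral_comp_mul zero_le_one one_le_two ha hb hab.le)
  · calc f r = (2 - 1) * f (r * 1) := by norm_num
      _ ≤ ∫ t in (1 : ℝ)..2, f (r * t) := hf.le_integral_comp_mul one_le_two hr
      _ ≤ r + ∫ t in (1 : ℝ)..2, f (r * t) := le_add_of_nonneg_left hr

theorem exists_isClassK_comp_le {X : Type*} (d V : X → ℝ) (hV : ∀ x, 0 ≤ V x)
    (hpos : ∀ r, 0 < r → ∃ ε, 0 < ε ∧ ∀ x, r ≤ d x → ε ≤ V x) :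
    ∃ α, IsClassK α ∧ ∀ x, 0 ≤ d x → α (d x) ≤ V x := by
  -- the `insert 1` makes the infimum positive also when no `x` is that far
  set c : ℝ → ℝ := fun r => sInf (insert 1 (V '' {x | r ≤ d x}))
  have hbdd : ∀ r, BddBelow (insert 1 (V '' {x | r ≤ d x})) := fun r =>
    ⟨0, forall_mem_insert.2 ⟨zero_le_one, forall_mem_image.2 fun x _ => hV x⟩⟩
  have hc : Monotone c := fun r s hrs =>
    csInf_le_csInf (hbdd r) (insert_nonempty _ _)
      (insert_subset_insert (image_mono fun x hx => hrs.trans hx))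
  have hc0 : 0 ≤ c 0 := le_csInf (insert_nonempty _ _)
    (forall_mem_insert.2 ⟨zero_le_one, forall_mem_image.2 fun x _ => hV x⟩)
  have hc_pos : ∀ r, 0 < r → 0 < c r := fun r hr => by
    obtain ⟨ε, hε, hεV⟩ := hpos r hr
    refine (lt_min one_pos hε).trans_le (le_csInf (insert_nonempty _ _) ?_)
    exact forall_mem_insert.2 ⟨min_le_left _ _,
      forall_mem_image.2 fun x hx => (min_le_right _ _).trans (hεV x hx)⟩
  obtain ⟨α, hα, hαc⟩ := hc.exists_isClassK_le hc0 hc_pos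
  exact ⟨α, hα, fun x hx => (hαc _ hx).trans
    (csInf_le (hbdd _) (mem_insert_of_mem _ ⟨x, (le_rfl : d x ≤ d x), rfl⟩))⟩

theorem exists_isClassK_comp_ge {X : Type*} (d V : X → ℝ)
    (hbdd : ∀ r, BddAbove (V '' {x | d x ≤ r}))
    (hsmall : ∀ ε, 0 < ε → ∃ δ, 0 < δ ∧ ∀ x, d x ≤ δ → V x < ε) :
    ∃ α, IsClassK α ∧ ∀ x, 0 ≤ d x → V x ≤ α (d x) := by
  set M : ℝ → ℝ := fun r => sSup (insert 0 (V '' {x | d x ≤ r}))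
  have hbdd' : ∀ r, BddAbove (insert 0 (V '' {x | d x ≤ r})) := fun r => (hbdd r).insert 0
  have hM : Monotone M := fun r s hrs =>
    csSup_le_csSup (hbdd' s) (insert_nonempty _ _)
      (insert_subset_insert (image_mono fun x hx => le_trans hx hrs))
  have hM_nonneg : ∀ r, 0 ≤ M r := fun r => le_csSup (hbdd' r) (mem_insert _ _)
  have hM_small : ∀ ε, 0 < ε → ∃ δ, 0 < δ ∧ ∀ r, r ≤ δ → M r ≤ ε := fun ε hε => by
    obtain ⟨δ, hδ, hδV⟩ := hsmall ε hε
    exact ⟨δ, hδ, fun r hr => csSup_le (insert_nonempty _ _) (forall_mem_insert.2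
      ⟨hε.le, forall_mem_image.2 fun x hx => (hδV x (le_trans hx hr)).le⟩)⟩
  have hM0 : M 0 = 0 := le_antisymm (le_of_forall_gt_imp_ge_of_dense fun ε hε => by
    obtain ⟨δ, hδ, hδM⟩ := hM_small ε hε
    exact hδM 0 hδ.le) (hM_nonneg 0)
  have hM_cont : ContinuousWithinAt M (Ici 0) 0 := by
    rw [ContinuousWithinAt, hM0]
    refine tendsto_order.2 ⟨fun a ha => Eventually.of_forall fun r => ha.trans_le (hM_nonneg r),
      fun a ha => ?_⟩
    obtain ⟨δ, hδ, hδM⟩ := hM_small (a / 2) (half_pos ha)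
    exact (eventually_nhdsWithin_of_eventually_nhds (eventually_lt_nhds hδ)).mono fun r hr =>
      (hδM r hr.le).trans_lt (half_lt_self ha)
  obtain ⟨α, hα, hαM⟩ := hM.exists_isClassK_ge hM0 hM_cont
  exact ⟨α, hα, fun x hx => (le_csSup (hbdd' _)
    (mem_insert_of_mem _ ⟨x, (le_rfl : d x ≤ d x), rfl⟩)).trans (hαM _ hx)⟩

theorem isCompact_setOf_le_of_radiallyUnbounded {E : Type*} [NormedAddCommGroup E]
    [ProperSpace E] {V : E → ℝ} (hV : Continuous V)
    (hrad : ∀ C : ℝ, ∃ R : ℝ, ∀ y : E, R ≤ ‖y‖ → C ≤ V y) (c : ℝ) :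
    IsCompact {y | V y ≤ c} := by
  obtain ⟨R, hR⟩ := hrad (c + 1)
  refine (isCompact_closedBall (0 : E) R).of_isClosed_subset (isClosed_le hV continuous_const)
    fun y (hy : V y ≤ c) => ?_
  rw [mem_closedBall_zero_iff]
  by_contra h
  linarith [hR y (not_le.1 h).le]

theorem IsClosed.exists_pos_le_of_pos {X : Type*} [TopologicalSpace X] {V : X → ℝ}
    (hV : Continuous V) {c : ℝ} (hc : 0 < c) (hK : IsCompact {x | V x ≤ c}) {s : Set X}
    (hs : IsClosed s) (hpos : ∀ x ∈ s, 0 < V x) : ∃ ε, 0 < ε ∧ ∀ x ∈ s, ε ≤ V x := by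
  rcases (s ∩ {x | V x ≤ c}).eq_empty_or_nonempty with hempty | hne
  · refine ⟨c, hc, fun x hx => le_of_not_gt fun h => ?_⟩
    exact hempty.subset ⟨hx, h.le⟩
  · obtain ⟨x₀, hx₀, hmin⟩ := (hK.inter_left hs).exists_isMinOn hne hV.continuousOn
    refine ⟨min c (V x₀), lt_min hc (hpos x₀ hx₀.1), fun x hx => ?_⟩
    by_cases hxc : V x ≤ c
    · exact (min_le_right _ _).trans (hmin ⟨hx, hxc⟩)
    · exact (min_le_left _ _).trans (not_le.1 hxc).le

theorem mem_cthickening_of_infDist_le {X : Type*} [PseudoMetricSpace X] {E : Set X}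
    (hE : E.Nonempty) {x : X} {δ : ℝ} (h : infDist x E ≤ δ) : x ∈ cthickening δ E := by
  rw [mem_cthickening_iff, ← ENNReal.ofReal_toReal (infEDist_ne_top hE)]
  exact ENNReal.ofReal_le_ofReal h

theorem IsCompact.exists_pos_forall_infDist_le_lt {X : Type*} [PseudoMetricSpace X]
    {G : Set X} (hG : IsCompact G) (hne : G.Nonempty) {V : X → ℝ} (hV : Continuous V) {ε : ℝ}
    (hVG : ∀ x ∈ G, V x < ε) : ∃ δ, 0 < δ ∧ ∀ x, infDist x G ≤ δ → V x < ε := by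
  obtain ⟨δ, hδ, hsub⟩ := hG.exists_cthickening_subset_open (isOpen_lt hV continuous_const) hVG
  exact ⟨δ, hδ, fun x hx => hsub (mem_cthickening_of_infDist_le hne hx)⟩

theorem IsCompact.bddAbove_image_setOf_infDist_le {X : Type*} [PseudoMetricSpace X]
    [ProperSpace X] {G : Set X} (hG : IsCompact G) (hne : G.Nonempty) {V : X → ℝ}
    (hV : Continuous V) (r : ℝ) : BddAbove (V '' {x | infDist x G ≤ r}) :=
  ((hG.cthickening).bddAbove_image hV.continuousOn).mono
    (image_mono fun _ hx => mem_cthickening_of_infDist_le hne hx)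

theorem classK_sandwich_general
    {m : ℕ} (V : EuclideanSpace ℝ (Fin m) → ℝ)
    (hVc : Continuous V) (hV0 : ∀ y, 0 ≤ V y)
    (hrad : ∀ C : ℝ, ∃ Rr : ℝ, ∀ y : EuclideanSpace ℝ (Fin m), Rr ≤ ‖y‖ → C ≤ V y)
    (G : Set (EuclideanSpace ℝ (Fin m)))
    (hGzero : G = V ⁻¹' {0}) (hGne : G.Nonempty) :
    IsCompact G ∧
    ∃ α₁ α₂ : ℝ → ℝ,
      ContinuousOn α₁ (Set.Ici 0) ∧ ContinuousOn α₂ (Set.Ici 0) ∧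
      StrictMonoOn α₁ (Set.Ici 0) ∧ StrictMonoOn α₂ (Set.Ici 0) ∧
      α₁ 0 = 0 ∧ α₂ 0 = 0 ∧
      (∀ s : ℝ, 0 ≤ s → 0 ≤ α₁ s) ∧ (∀ s : ℝ, 0 ≤ s → 0 ≤ α₂ s) ∧
      ∀ y, α₁ (Metric.infDist y G) ≤ V y ∧ V y ≤ α₂ (Metric.infDist y G) := by
  have hsublevel := isCompact_setOf_le_of_radiallyUnbounded hVc hrad
  have hGc : IsCompact G := hGzero ▸ (hsublevel 0).of_isClosed_subset
    (isClosed_singleton.preimage hVc) fun y hy => hy.le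
  have hfar : ∀ r, 0 < r → ∃ ε, 0 < ε ∧ ∀ y, r ≤ infDist y G → ε ≤ V y := fun r hr => by
    refine (isClosed_le continuous_const (continuous_infDist_pt G)).exists_pos_le_of_pos hVc
      one_pos (hsublevel 1) fun y hy => (hV0 y).lt_of_ne fun hVy => ?_
    have : infDist y G = 0 := infDist_zero_of_mem (hGzero ▸ hVy.symm)
    exact (hr.trans_le hy).ne' this
  have hnear : ∀ ε, 0 < ε → ∃ δ, 0 < δ ∧ ∀ y, infDist y G ≤ δ → V y < ε := fun ε hε =>
    hGc.exists_pos_forall_infDist_le_lt hGne hVc fun y hy => by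
      rw [hGzero] at hy
      rwa [mem_singleton_iff.1 (mem_preimage.1 hy)]
  obtain ⟨α₁, hα₁, hα₁V⟩ := exists_isClassK_comp_le (infDist · G) V hV0 hfar
  obtain ⟨α₂, hα₂, hVα₂⟩ := exists_isClassK_comp_ge (infDist · G) V
    (hGc.bddAbove_image_setOf_infDist_le hGne hVc) hnear
  exact ⟨hGc, α₁, α₂, hα₁.continuousOn, hα₂.continuousOn, hα₁.strictMonoOn, hα₂.strictMonoOn,
    hα₁.map_zero, hα₂.map_zero, fun _ => hα₁.nonneg, fun _ => hα₂.nonneg,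
    fun y => ⟨hα₁V y infDist_nonneg, hVα₂ y infDist_nonneg⟩⟩

/-- **Class-K sandwich for a radially unbounded Lyapunov function.** If `V : ℝ^m → [0,∞)` is
continuous, radially unbounded, and `G = V⁻¹({0})` is nonempty and is the set of global
minima of `V`, then `G` is compact and there are continuous strictly increasing functions
`α₁, α₂ : [0,∞) → [0,∞)` vanishing at `0` with
`α₁(dist(y,G)) ≤ V(y) ≤ α₂(dist(y,G))` for all `y`. -/
theorem classK_sandwich
    {m : ℕ} (V : EuclideanSpace ℝ (Fin m) → ℝ)
    (hVc : Continuous V) (hV0 : ∀ y, 0 ≤ V y)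
    (hrad : ∀ C : ℝ, ∃ Rr : ℝ, ∀ y : EuclideanSpace ℝ (Fin m), Rr ≤ ‖y‖ → C ≤ V y)
    (G : Set (EuclideanSpace ℝ (Fin m)))
    (hGzero : G = V ⁻¹' {0}) (hGne : G.Nonempty)
    (hGmin : G = {ystar | ∀ y, V ystar ≤ V y}) :
    IsCompact G ∧
    ∃ α₁ α₂ : ℝ → ℝ,
      ContinuousOn α₁ (Set.Ici 0) ∧ ContinuousOn α₂ (Set.Ici 0) ∧
      StrictMonoOn α₁ (Set.Ici 0) ∧ StrictMonoOn α₂ (Set.Ici 0) ∧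
      α₁ 0 = 0 ∧ α₂ 0 = 0 ∧
      (∀ s : ℝ, 0 ≤ s → 0 ≤ α₁ s) ∧ (∀ s : ℝ, 0 ≤ s → 0 ≤ α₂ s) ∧
      ∀ y, α₁ (Metric.infDist y G) ≤ V y ∧ V y ≤ α₂ (Metric.infDist y G) :=
  classK_sandwich_general V hVc hV0 hrad G hGzero hGne
end

section
/- Let ψ : ℝ → (0,∞) be continuous, strictly positive and increasing, and let Ψ be a primitive of 1/ψ (so Ψ' = 1/ψ). Let (v_n) be a sequence of nonnegative reals and (u_n) a real sequence such that u_{n+1} − u_n ≤ −v_n ψ(u_n) for all n ∈ ℕ. Then for all n ∈ ℕ: Ψ(u_n) ≤ Ψ(u_0) − Σ_{k=0}^{n−1} v_k; equivalently, since Ψ is strictly increasing, u_n ≤ Ψ^{-1}(Ψ(u_0) − Σ_{k=0}^{n−1} v_k) whenever the right-hand side argument lies in the range of Ψ. -/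
/-!
Along the recursion `u` can only decrease, and `Ψ' = 1/ψ ≥ 1/ψ(uₙ)` on `(-∞, uₙ]` because `ψ` is
increasing. The mean value inequality therefore gives
`Ψ(uₙ) - Ψ(uₙ₊₁) ≥ (uₙ - uₙ₊₁) / ψ(uₙ) ≥ vₙ`, and the claim follows by telescoping.
-/

open Set

section PrimitiveOfInv

variable {ψ Ψ : ℝ → ℝ}

theorem sub_div_le_sub_of_hasDerivAt_one_div (hψpos : ∀ x, 0 < ψ x) (hψmono : Monotone ψ)
    (hΨ : ∀ x, HasDerivAt Ψ (1 / ψ x) x) {x y : ℝ} (hyx : y ≤ x) :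
    (x - y) / ψ x ≤ Ψ x - Ψ y := by
  have hdiff : Differentiable ℝ Ψ := fun t => (hΨ t).differentiableAt
  have hderiv : ∀ t ∈ interior (Iic x), 1 / ψ x ≤ deriv Ψ t := by
    intro t ht
    rw [interior_Iic] at ht
    rw [(hΨ t).deriv]
    exact one_div_le_one_div_of_le (hψpos t) (hψmono (le_of_lt ht))
  have := (convex_Iic x).mul_sub_le_image_sub_of_le_deriv hdiff.continuous.continuousOn
    hdiff.differentiableOn hderiv y hyx x (le_refl x) hyx
  rwa [one_div_mul_eq_div] at this

theorem le_sub_of_sub_le_neg_mul (hψpos : ∀ x, 0 < ψ x) (hψmono : Monotone ψ)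
    (hΨ : ∀ x, HasDerivAt Ψ (1 / ψ x) x) {a b w : ℝ} (hw : 0 ≤ w) (hstep : b - a ≤ -w * ψ a) :
    Ψ b ≤ Ψ a - w := by
  have hψa := hψpos a
  have hba : b ≤ a := by nlinarith
  have hw_le : w ≤ (a - b) / ψ a := by rw [le_div_iff₀ hψa]; linarith
  linarith [sub_div_le_sub_of_hasDerivAt_one_div hψpos hψmono hΨ hba]

end PrimitiveOfInv

theorem le_sub_sum_range_of_succ_le_sub {f v : ℕ → ℝ} (h : ∀ n, f (n + 1) ≤ f n - v n) (n : ℕ) :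
    f n ≤ f 0 - ∑ k ∈ Finset.range n, v k := by
  induction n with
  | zero => simp
  | succ n ih =>
    rw [Finset.sum_range_succ]
    linarith [h n]

theorem nonlinear_discrete_gronwall_general
    (ψ Ψ : ℝ → ℝ)
    (hψpos : ∀ x, 0 < ψ x) (hψmono : Monotone ψ)
    (hΨ : ∀ x, HasDerivAt Ψ (1 / ψ x) x)
    (u v : ℕ → ℝ) (hv : ∀ n, 0 ≤ v n)
    (hrec : ∀ n, u (n + 1) - u n ≤ -(v n) * ψ (u n)) :
    ∀ n, Ψ (u n) ≤ Ψ (u 0) - ∑ k ∈ Finset.range n, v k :=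
  le_sub_sum_range_of_succ_le_sub fun n =>
    le_sub_of_sub_le_neg_mul hψpos hψmono hΨ (hv n) (hrec n)

/-- **Nonlinear discrete Gronwall lemma.** Let `ψ : ℝ → (0,∞)` be continuous, strictly
positive and increasing, `Ψ` a primitive of `1/ψ`, `(v_n)` nonnegative, and suppose
`u_{n+1} − u_n ≤ −v_n ψ(u_n)` for all `n`. Then `Ψ(u_n) ≤ Ψ(u_0) − Σ_{k<n} v_k`
for all `n` (equivalently `u_n ≤ Ψ⁻¹(Ψ(u_0) − Σ_{k<n} v_k)` since `Ψ` is strictly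
increasing). -/
theorem nonlinear_discrete_gronwall
    (ψ Ψ : ℝ → ℝ)
    (hψc : Continuous ψ) (hψpos : ∀ x, 0 < ψ x) (hψmono : Monotone ψ)
    (hΨ : ∀ x, HasDerivAt Ψ (1 / ψ x) x)
    (u v : ℕ → ℝ) (hv : ∀ n, 0 ≤ v n)
    (hrec : ∀ n, u (n + 1) - u n ≤ -(v n) * ψ (u n)) :
    ∀ n, Ψ (u n) ≤ Ψ (u 0) - ∑ k ∈ Finset.range n, v k :=
  nonlinear_discrete_gronwall_general ψ Ψ hψpos hψmono hΨ u v hv hrec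
end
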